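/- Let b0 : X → ℝ be nonnegative with Σ_{x∈X} b0(x) = 1, let h ∈ ℕ, and let d0 ∈ D. Then for every influence I: max_{a∈A} Σ_{x∈X} b0(x)·Q^I_h((x,d0),a) ≤ V̂^M, where V̂^M := max_{a∈A} Σ_{x∈X} b0(x)·Q̂_h(x,a). That is, the influence-optimistic Q-MMDP bound V̂^M upper-bounds the Q-MMDP value of the influence-augmented sub-problem for every influence I. -/

import Mathlib

open Finset

section QMMDP

variable {Xl Xn A U D : Type*}
  [Fintype Xl] [Nonempty Xl] [Fintype Xn] [Nonempty Xn]
  [Fintype A] [Nonempty A] [Fintype U] [Nonempty U] [Fintype D] [Nonempty D]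

/-- Influence-optimistic Q-MMDP values `Q̂_k(x,a)`. -/
noncomputable def Qhat (Pl : Xl → (Xl × Xn) → A → ℝ) (Pn : Xn → (Xl × Xn) → A → U → ℝ)
    (R : (Xl × Xn) → A → (Xl × Xn) → ℝ) :
    ℕ → (Xl × Xn) → A → ℝ
  | 0 => fun _ _ => 0
  | k + 1 => fun x a =>
      Finset.univ.sup' Finset.univ_nonempty (fun u : U =>
        ∑ x' : Xl × Xn, Pl x'.1 x a * Pn x'.2 x a u *
          (R x a x' +
            Finset.univ.sup' Finset.univ_nonempty (fun a' : A => Qhat Pl Pn R k x' a')))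

/-- Influence-induced Q-MMDP values `Q^I_k((x,d),a)` of the influence-augmented
sub-problem, for an influence `I`. -/
noncomputable def QI (Pl : Xl → (Xl × Xn) → A → ℝ) (Pn : Xn → (Xl × Xn) → A → U → ℝ)
    (δ : (Xl × Xn) → D → A → (Xl × Xn) → D) (R : (Xl × Xn) → A → (Xl × Xn) → ℝ)
    (I : D → U → ℝ) :
    ℕ → (Xl × Xn) → D → A → ℝ
  | 0 => fun _ _ _ => 0
  | k + 1 => fun x d a =>
      ∑ x' : Xl × Xn, Pl x'.1 x a * (∑ u : U, Pn x'.2 x a u * I d u) *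
        (R x a x' +
          Finset.univ.sup' Finset.univ_nonempty (fun a' : A =>
            QI Pl Pn δ R I k x' (δ x d a x') a'))

end QMMDP

/-
The influence enters `Q^I` only through the mixture `∑ u, Pn (·|u) I(u|d)` of next-state kernels,
so one backup of `Q^I` is an `I(·|d)`-weighted average over `u` of backups with a fixed `u`.
Such an average is at most the maximum over `u`, which is the backup defining `Q̂`; by
monotonicity of the backup in the continuation values, induction on the horizon gives
`Q^I_k((x,d),a) ≤ Q̂_k(x,a)` pointwise, and averaging against `b0` and maximising over `a`
preserves it.
-/

theorem Finset.sum_mul_le_sup'_of_sum_eq_one {ι : Type*} [Fintype ι] [Nonempty ι]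
    {w f : ι → ℝ} (hw0 : ∀ i, 0 ≤ w i) (hw1 : ∑ i, w i = 1) :
    ∑ i, w i * f i ≤ univ.sup' univ_nonempty f := by
  have hmass := centerMass_le_sup (s := univ) (f := f) (fun i _ => hw0 i) (hw1 ▸ one_pos)
  rwa [centerMass_eq_of_sum_1 _ _ hw1] at hmass

section QMMDPBackup

variable {Xl Xn A U D : Type*} [Fintype Xl] [Fintype Xn] [Fintype A] [Nonempty A] [Fintype U]

variable (Pl : Xl → (Xl × Xn) → A → ℝ) (Pn : Xn → (Xl × Xn) → A → U → ℝ)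
  (δ : (Xl × Xn) → D → A → (Xl × Xn) → D) (R : (Xl × Xn) → A → (Xl × Xn) → ℝ)
  (I : D → U → ℝ)

theorem QI_succ_eq_sum_influence (k : ℕ) (x : Xl × Xn) (d : D) (a : A) :
    QI Pl Pn δ R I (k + 1) x d a =
      ∑ u : U, I d u * ∑ x' : Xl × Xn, Pl x'.1 x a * Pn x'.2 x a u *
        (R x a x' + univ.sup' univ_nonempty (fun a' : A =>
          QI Pl Pn δ R I k x' (δ x d a x') a')) := by
  rw [QI]
  simp only [mul_sum, sum_mul]
  rw [sum_comm]
  exact sum_congr rfl fun u _ => sum_congr rfl fun x' _ => by ring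

variable {Pl Pn I}

theorem QI_le_Qhat [Nonempty U] (hPl0 : ∀ x'l x a, 0 ≤ Pl x'l x a)
    (hPn0 : ∀ x'n x a u, 0 ≤ Pn x'n x a u) (hI0 : ∀ d u, 0 ≤ I d u)
    (hI1 : ∀ d, ∑ u : U, I d u = 1) (k : ℕ) (x : Xl × Xn) (d : D) (a : A) :
    QI Pl Pn δ R I k x d a ≤ Qhat Pl Pn R k x a := by
  induction k generalizing x d a with
  | zero => simp [QI, Qhat]
  | succ k ih =>
    rw [QI_succ_eq_sum_influence, Qhat]
    refine (sum_le_sum fun u _ => ?_).trans (sum_mul_le_sup'_of_sum_eq_one (hI0 d) (hI1 d))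
    gcongr with x' _ a'
    · exact hI0 d u
    · exact mul_nonneg (hPl0 _ _ _) (hPn0 _ _ _ _)
    · exact ih x' _ a'

end QMMDPBackup

section QMMDP

variable {Xl Xn A U D : Type*}
  [Fintype Xl] [Nonempty Xl] [Fintype Xn] [Nonempty Xn]
  [Fintype A] [Nonempty A] [Fintype U] [Nonempty U] [Fintype D] [Nonempty D]

theorem IO_QMMDP_upper_bound_general
    (Pl : Xl → (Xl × Xn) → A → ℝ) (Pn : Xn → (Xl × Xn) → A → U → ℝ)
    (δ : (Xl × Xn) → D → A → (Xl × Xn) → D) (R : (Xl × Xn) → A → (Xl × Xn) → ℝ)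
    (hPl0 : ∀ x'l x a, 0 ≤ Pl x'l x a)
    (hPn0 : ∀ x'n x a u, 0 ≤ Pn x'n x a u)
    (b0 : Xl × Xn → ℝ) (hb00 : ∀ x, 0 ≤ b0 x)
    (h : ℕ) (d0 : D)
    (I : D → U → ℝ) (hI0 : ∀ d u, 0 ≤ I d u) (hI1 : ∀ d, ∑ u : U, I d u = 1) :
    Finset.univ.sup' Finset.univ_nonempty
        (fun a : A => ∑ x : Xl × Xn, b0 x * QI Pl Pn δ R I h x d0 a) ≤
      Finset.univ.sup' Finset.univ_nonempty
        (fun a : A => ∑ x : Xl × Xn, b0 x * Qhat Pl Pn R h x a) :=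
  sup'_mono_fun fun a _ => sum_le_sum fun x _ =>
    mul_le_mul_of_nonneg_left (QI_le_Qhat δ R hPl0 hPn0 hI0 hI1 h x d0 a) (hb00 x)

/-- the influence-optimistic Q-MMDP bound
`V̂^M = max_a ∑_x b0 x * Q̂_h x a` upper-bounds the Q-MMDP value of the
influence-augmented sub-problem for every influence `I`. -/
theorem IO_QMMDP_upper_bound
    (Pl : Xl → (Xl × Xn) → A → ℝ) (Pn : Xn → (Xl × Xn) → A → U → ℝ)
    (δ : (Xl × Xn) → D → A → (Xl × Xn) → D) (R : (Xl × Xn) → A → (Xl × Xn) → ℝ)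
    (hPl0 : ∀ x'l x a, 0 ≤ Pl x'l x a) (hPl1 : ∀ x a, ∑ x'l : Xl, Pl x'l x a = 1)
    (hPn0 : ∀ x'n x a u, 0 ≤ Pn x'n x a u) (hPn1 : ∀ x a u, ∑ x'n : Xn, Pn x'n x a u = 1)
    (b0 : Xl × Xn → ℝ) (hb00 : ∀ x, 0 ≤ b0 x) (hb01 : ∑ x : Xl × Xn, b0 x = 1)
    (h : ℕ) (d0 : D)
    (I : D → U → ℝ) (hI0 : ∀ d u, 0 ≤ I d u) (hI1 : ∀ d, ∑ u : U, I d u = 1) :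
    Finset.univ.sup' Finset.univ_nonempty
        (fun a : A => ∑ x : Xl × Xn, b0 x * QI Pl Pn δ R I h x d0 a) ≤
      Finset.univ.sup' Finset.univ_nonempty
        (fun a : A => ∑ x : Xl × Xn, b0 x * Qhat Pl Pn R h x a) :=
  IO_QMMDP_upper_bound_general Pl Pn δ R hPl0 hPn0 b0 hb00 h d0 I hI0 hI1

end QMMDP
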